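/- arXiv:1011.3977 — 2 statements merged into one kernel-verified Lean document; each statement's English description precedes it below -/
import Mathlib

section
/- Let n ≥ 3 and let f₁,...,fₙ : ℝⁿ → ℝ be smooth functions satisfying ∂ᵢfᵢ = ∂ⱼfⱼ for all i,j and ∂ᵢfⱼ + ∂ⱼfᵢ = 0 for all i ≠ j. Then there exist constants Bᵢ, cᵢ, c, and a skew-symmetric matrix (d_{ik}) such that fᵢ(x) = xⁱ·(Σₖ Bₖxᵏ) − (1/2)Bᵢ·Σₖ(xᵏ)² + Σₖ d_{ik}xᵏ + c·xⁱ + cᵢ. -/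
noncomputable section
open scoped BigOperators

/-- Partial derivative in the `i`-th coordinate direction. -/
def pd {n : ℕ} (i : Fin n) (f : (Fin n → ℝ) → ℝ) (x : Fin n → ℝ) : ℝ :=
  fderiv ℝ f x (Pi.single i 1)

variable {n : ℕ}

lemma pd_smooth {g : (Fin n → ℝ) → ℝ} (hg : ContDiff ℝ (⊤ : ℕ∞) g) (a : Fin n) :
    ContDiff ℝ (⊤ : ℕ∞) (pd a g) :=
  (hg.fderiv_right ((by simp))).clm_apply contDiff_const

lemma pd_symm {g : (Fin n → ℝ) → ℝ} (hg : ContDiff ℝ (⊤ : ℕ∞) g) (a b : Fin n) (x : Fin n → ℝ) :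
    pd a (pd b g) x = pd b (pd a g) x := by
  have hsym : IsSymmSndFDerivAt ℝ g x := (hg.contDiffAt).isSymmSndFDerivAt (by rw [minSmoothness_of_isRCLikeNormedField]; exact WithTop.coe_le_coe.mpr le_top)
  have hd : DifferentiableAt ℝ (fderiv ℝ g) x :=
    (hg.fderiv_right (m := 1) (WithTop.coe_le_coe.mpr le_top)).differentiable one_ne_zero x
  have key : ∀ u v : Fin n → ℝ, fderiv ℝ (fun y => fderiv ℝ g y u) x v
      = fderiv ℝ (fderiv ℝ g) x v u := by
    intro u v
    rw [fderiv_clm_apply hd (differentiableAt_const u)]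
    simp
  unfold pd
  rw [key, key, hsym]

lemma fderiv_eq_sum_pd {g : (Fin n → ℝ) → ℝ} {x : Fin n → ℝ} (v : Fin n → ℝ) :
    fderiv ℝ g x v = ∑ a, v a * pd a g x := by
  have hv : v = ∑ a, v a • (Pi.single a (1:ℝ) : Fin n → ℝ) := by
    conv_lhs => rw [← Finset.univ_sum_single v]
    congr 1; ext a
    rw [← Pi.single_smul, smul_eq_mul, mul_one]
  conv_lhs => rw [hv]
  rw [map_sum]
  simp [pd]

lemma zero_pd_const {g : (Fin n → ℝ) → ℝ} (hg : ContDiff ℝ (⊤ : ℕ∞) g)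
    (h : ∀ a x, pd a g x = 0) (x : Fin n → ℝ) : g x = g 0 := by
  have : ∀ y, fderiv ℝ g y = 0 := by
    intro y
    ext v
    rw [ContinuousLinearMap.zero_apply, fderiv_eq_sum_pd]
    simp [h]
  exact is_const_of_fderiv_eq_zero (hg.differentiable (by simp)) this x 0

lemma pd_add {g h : (Fin n → ℝ) → ℝ} {x : Fin n → ℝ} (a : Fin n)
    (hg : DifferentiableAt ℝ g x) (hh : DifferentiableAt ℝ h x) :
    pd a (fun y => g y + h y) x = pd a g x + pd a h x := by
  unfold pd; rw [fderiv_fun_add hg hh]; simp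

lemma pd_sub {g h : (Fin n → ℝ) → ℝ} {x : Fin n → ℝ} (a : Fin n)
    (hg : DifferentiableAt ℝ g x) (hh : DifferentiableAt ℝ h x) :
    pd a (fun y => g y - h y) x = pd a g x - pd a h x := by
  unfold pd; rw [fderiv_fun_sub hg hh]; simp

lemma pd_mul {g h : (Fin n → ℝ) → ℝ} {x : Fin n → ℝ} (a : Fin n)
    (hg : DifferentiableAt ℝ g x) (hh : DifferentiableAt ℝ h x) :
    pd a (fun y => g y * h y) x = pd a g x * h x + g x * pd a h x := by
  unfold pd; rw [fderiv_fun_mul hg hh]; simp; ring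

lemma pd_const (a : Fin n) (c : ℝ) (x : Fin n → ℝ) : pd a (fun _ => c) x = 0 := by
  unfold pd; simp

lemma pd_const_mul {g : (Fin n → ℝ) → ℝ} {x : Fin n → ℝ} (a : Fin n) (c : ℝ)
    (hg : DifferentiableAt ℝ g x) :
    pd a (fun y => c * g y) x = c * pd a g x := by
  unfold pd; rw [fderiv_const_mul hg]; simp

lemma pd_coord (a i : Fin n) (x : Fin n → ℝ) :
    pd a (fun y => y i) x = if i = a then 1 else 0 := by
  unfold pd
  have : (fun y : Fin n → ℝ => y i) = (ContinuousLinearMap.proj i : (Fin n → ℝ) →L[ℝ] ℝ) := rfl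
  rw [this, ContinuousLinearMap.fderiv]
  simp [Pi.single_apply]

lemma pd_sum {ι : Type*} (s : Finset ι) (F : ι → (Fin n → ℝ) → ℝ) {x : Fin n → ℝ} (a : Fin n)
    (hF : ∀ i ∈ s, DifferentiableAt ℝ (F i) x) :
    pd a (fun y => ∑ i ∈ s, F i y) x = ∑ i ∈ s, pd a (F i) x := by
  unfold pd; rw [fderiv_fun_sum hF]; simp

lemma pd_neg {g : (Fin n → ℝ) → ℝ} {x : Fin n → ℝ} (a : Fin n) :
    pd a (fun y => -g y) x = - pd a g x := by
  unfold pd; rw [fderiv_fun_neg]; simp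

lemma cd_coord (i : Fin n) : ContDiff ℝ (⊤ : ℕ∞) (fun y : Fin n → ℝ => y i) :=
  (ContinuousLinearMap.proj i : (Fin n → ℝ) →L[ℝ] ℝ).contDiff

lemma cd_linear (k : Fin n → ℝ) : ContDiff ℝ (⊤ : ℕ∞) (fun y : Fin n → ℝ => ∑ a, k a * y a) :=
  ContDiff.sum fun a _ => contDiff_const.mul (cd_coord a)

lemma pd_linear (k : Fin n → ℝ) (a : Fin n) (x : Fin n → ℝ) :
    pd a (fun y : Fin n → ℝ => ∑ i, k i * y i) x = k a := by
  rw [pd_sum Finset.univ (fun i => fun y => k i * y i) a (fun i _ => by fun_prop)]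
  have : ∀ i : Fin n, pd a (fun y : Fin n → ℝ => k i * y i) x
      = if i = a then k i else 0 := by
    intro i
    rw [pd_const_mul a (k i) (by fun_prop), pd_coord]
    split <;> simp
  simp [this]

lemma pd_sqsum (a : Fin n) (x : Fin n → ℝ) :
    pd a (fun y : Fin n → ℝ => ∑ k, (y k)^2) x = 2 * x a := by
  have h : (fun y : Fin n → ℝ => ∑ k, (y k)^2) = fun y => ∑ k, y k * y k := by
    funext y; simp [sq]
  rw [h, pd_sum Finset.univ (fun k => fun y => y k * y k) a (fun i _ => by fun_prop)]
  have : ∀ k : Fin n, pd a (fun y : Fin n → ℝ => y k * y k) x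
      = if k = a then 2 * x k else 0 := by
    intro k
    rw [pd_mul a (by fun_prop) (by fun_prop), pd_coord]
    split <;> ring
  simp [this]

lemma pd_affine {g : (Fin n → ℝ) → ℝ} (hg : ContDiff ℝ (⊤ : ℕ∞) g) (k : Fin n → ℝ)
    (h : ∀ a x, pd a g x = k a) (x : Fin n → ℝ) :
    g x = g 0 + ∑ a, k a * x a := by
  have hgd := hg.differentiable (by simp)
  have hlin := cd_linear k
  have key := zero_pd_const (g := fun y => g y - ∑ a, k a * y a) (hg.sub hlin)
    (fun a y => by
      rw [pd_sub a (hgd y) (hlin.differentiable (by simp) y), h, pd_linear]; ring) x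
  have h0 : ∑ a, k a * (0 : Fin n → ℝ) a = 0 := by simp
  rw [h0] at key
  linarith

/-- if smooth `f₁,…,fₙ` on `ℝⁿ` (`n ≥ 3`) satisfy `∂ᵢfᵢ = ∂ⱼfⱼ` and
`∂ᵢfⱼ + ∂ⱼfᵢ = 0` for `i ≠ j`, then each `fᵢ` is of the stated quadratic form. -/
theorem stmt0 {n : ℕ} (hn : 3 ≤ n) (f : Fin n → (Fin n → ℝ) → ℝ)
    (hsmooth : ∀ i, ContDiff ℝ (⊤ : ℕ∞) (f i))
    (h1 : ∀ i j x, pd i (f i) x = pd j (f j) x)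
    (h2 : ∀ i j x, i ≠ j → pd i (f j) x + pd j (f i) x = 0) :
    ∃ (B C : Fin n → ℝ) (c : ℝ) (d : Fin n → Fin n → ℝ),
      (∀ i k, d k i = - d i k) ∧
      ∀ i x, f i x =
        x i * (∑ k, B k * x k) - (1/2) * B i * (∑ k, (x k)^2)
        + (∑ k, d i k * x k) + c * x i + C i := by
  have hexthird : ∀ p q : Fin n, ∃ r : Fin n, r ≠ p ∧ r ≠ q := by
    intro p q
    by_contra hcon
    push_neg at hcon
    have hsub : (Finset.univ : Finset (Fin n)) ⊆ {p, q} := by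
      intro r _
      rcases Classical.em (r = p) with h | h
      · simp [h]
      · simp [hcon r h]
    have := Finset.card_le_card hsub
    have h2card : ({p, q} : Finset (Fin n)).card ≤ 2 := Finset.card_insert_le _ _ |>.trans (by simp)
    simp [Finset.card_univ] at this
    omega
  set i0 : Fin n := ⟨0, by omega⟩ with hi0
  set lam : (Fin n → ℝ) → ℝ := pd i0 (f i0) with hlam
  have hlamfun : ∀ i, pd i (f i) = lam := fun i => funext fun x => h1 i i0 x
  have hlam_smooth : ContDiff ℝ (⊤ : ℕ∞) lam := pd_smooth (hsmooth i0) i0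
  set L : Fin n → (Fin n → ℝ) → ℝ := fun a => pd a lam with hL
  have hL_smooth : ∀ a, ContDiff ℝ (⊤ : ℕ∞) (L a) := fun a => pd_smooth hlam_smooth a
  have hpdf_smooth : ∀ b c, ContDiff ℝ (⊤ : ℕ∞) (pd b (f c)) := fun b c => pd_smooth (hsmooth c) b
  -- basic second-derivative identities
  have Tbb : ∀ a b : Fin n, pd a (pd b (f b)) = L a := by
    intro a b; rw [hlamfun b]
  have Tac : ∀ a b : Fin n, pd a (pd b (f a)) = L b := by
    intro a b
    funext x
    rw [pd_symm (hsmooth a) a b x, hlamfun a]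
  have case_neq : ∀ a b c : Fin n, b ≠ c →
      ∀ x, pd a (pd b (f c)) x = - pd a (pd c (f b)) x := by
    intro a b c hbc x
    have hfun : pd b (f c) = fun y => - pd c (f b) y := funext fun y => by
      have := h2 b c y hbc; linarith
    rw [hfun, pd_neg]
  have Taac : ∀ a c : Fin n, a ≠ c → pd a (pd a (f c)) = fun x => - L c x := by
    intro a c hac
    funext x
    rw [case_neq a a c hac x, pd_symm (hsmooth a) a c x, hlamfun a]
  have Toff : ∀ a b c : Fin n, a ≠ b → b ≠ c → a ≠ c →
      pd a (pd b (f c)) = fun _ => (0:ℝ) := by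
    intro a b c hab hbc hac
    funext x
    have e1 := case_neq a b c hbc x
    have e2 := pd_symm (hsmooth b) a c x
    have e3 := case_neq c a b hab x
    have e4 := pd_symm (hsmooth a) c b x
    have e5 := case_neq b c a (Ne.symm hac) x
    have e6 := pd_symm (hsmooth c) b a x
    show pd a (pd b (f c)) x = 0
    linarith
  -- second derivatives of lam vanish
  have hMoff : ∀ p q : Fin n, p ≠ q → ∀ x, pd p (L q) x = 0 := by
    intro p q hpq x
    obtain ⟨r, hrp, hrq⟩ := hexthird p q
    have hLq : L q = pd r (pd q (f r)) := (Tac r q).symm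
    rw [hLq]
    have := pd_symm (hpdf_smooth q r) p r x
    rw [this, Toff p q r hpq (Ne.symm hrq) (Ne.symm hrp), pd_const]
  have hMneg : ∀ p q : Fin n, p ≠ q → ∀ x, pd q (L q) x = - pd p (L p) x := by
    intro p q hpq x
    have hLq : L q = pd p (pd q (f p)) := (Tac p q).symm
    rw [hLq]
    have hs := pd_symm (hpdf_smooth q p) q p x
    rw [hs, Taac q p (Ne.symm hpq)]
    have : pd p (fun y => - L p y) x = - pd p (L p) x := pd_neg p
    rw [this]
  have hM0 : ∀ p q : Fin n, ∀ x, pd p (L q) x = 0 := by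
    intro p q x
    rcases eq_or_ne p q with h | h
    · subst h
      obtain ⟨q, hqp, _⟩ := hexthird p p
      obtain ⟨r, hrp, hrq⟩ := hexthird p q
      have e1 := hMneg q p hqp x
      have e2 := hMneg r q hrq x
      have e3 := hMneg r p hrp x
      linarith
    · exact hMoff p q h x
  -- L is constant
  set B : Fin n → ℝ := fun a => L a 0 with hB
  have hLconst : ∀ a x, L a x = B a := fun a x =>
    zero_pd_const (hL_smooth a) (fun p y => hM0 p a y) x
  -- closed form for second derivatives of f
  set t : Fin n → Fin n → Fin n → ℝ := fun a b c =>
    (if b = c then B a else 0) + (if a = c then B b else 0) - (if a = b then B c else 0)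
    with ht
  have Tform : ∀ a b c : Fin n, ∀ x, pd a (pd b (f c)) x = t a b c := by
    intro a b c x
    rcases eq_or_ne b c with hbc | hbc
    · subst hbc
      rw [Tbb a b, hLconst]
      rcases eq_or_ne a b with hab | hab <;> simp [ht, hab]
    · rcases eq_or_ne a c with hac | hac
      · subst hac
        rw [Tac a b, hLconst]
        have hab : a ≠ b := Ne.symm hbc
        simp [ht, hbc, hab]
      · rcases eq_or_ne a b with hab | hab
        · subst hab
          rw [Taac a c hac]
          simp only
          rw [hLconst]
          simp [ht, hbc, hac]
        · rw [Toff a b c hab hbc hac]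
          simp [ht, hbc, hac, hab]
  -- first derivatives are affine
  have hGaffine : ∀ b c : Fin n, ∀ x, pd b (f c) x = pd b (f c) 0 + ∑ a, t a b c * x a :=
    fun b c x => pd_affine (hpdf_smooth b c) (fun a => t a b c) (fun a y => Tform a b c y) x
  -- the data
  set c0 : ℝ := lam 0 with hc0
  set d : Fin n → Fin n → ℝ := fun i k => pd k (f i) 0 - (if i = k then c0 else 0) with hd
  refine ⟨B, fun i => f i 0, c0, d, ?_, ?_⟩
  · intro i k
    rcases eq_or_ne i k with h | h
    · subst h
      have : pd i (f i) 0 = c0 := by rw [hlamfun i]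
      simp [hd, this]
    · have := h2 k i 0 (Ne.symm h)
      simp only [hd, if_neg h, if_neg (Ne.symm h)]
      linarith
  · intro i x
    set P : (Fin n → ℝ) → ℝ := fun y =>
      y i * (∑ k, B k * y k) - (1/2) * B i * (∑ k, (y k)^2)
        + (∑ k, d i k * y k) + c0 * y i + f i 0 with hP
    have hPsmooth : ContDiff ℝ (⊤ : ℕ∞) P := by
      apply ContDiff.add (ContDiff.add (ContDiff.add (ContDiff.sub ?_ ?_) ?_) ?_) contDiff_const
      · exact (cd_coord i).mul (cd_linear B)
      · exact contDiff_const.mul (ContDiff.sum fun k _ => (cd_coord k).pow 2)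
      · exact cd_linear (d i)
      · exact contDiff_const.mul (cd_coord i)
    have hpdP : ∀ b x, pd b P x =
        (if i = b then (∑ k, B k * x k) else 0) + x i * B b
          - (1/2) * B i * (2 * x b) + d i b + c0 * (if i = b then 1 else 0) := by
      intro b x
      rw [hP]
      rw [pd_add b (by fun_prop) (by fun_prop)]
      rw [pd_add b (by fun_prop) (by fun_prop)]
      rw [pd_add b (by fun_prop) (by fun_prop)]
      rw [pd_sub b (by fun_prop) (by fun_prop)]
      rw [pd_mul b (by fun_prop) (by fun_prop)]
      rw [pd_const_mul b ((1/2) * B i) (by fun_prop)]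
      rw [pd_const_mul b c0 (by fun_prop)]
      rw [pd_coord, pd_linear B, pd_linear (d i), pd_sqsum, pd_const]
      rcases eq_or_ne i b with h | h <;> simp [h] <;> ring
    have hpdeq : ∀ b x, pd b (f i) x = pd b P x := by
      intro b x
      rw [hpdP b x, hGaffine b i x]
      have hsum : ∑ a, t a b i * x a =
          (if b = i then ∑ a, B a * x a else 0) + B b * x i - B i * x b := by
        rw [ht]
        simp only [add_mul, sub_mul, ite_mul, zero_mul, Finset.sum_add_distrib,
          Finset.sum_sub_distrib]
        congr 1
        · congr 1
          · rcases eq_or_ne b i with h | h <;> simp [h, Finset.mul_sum, mul_comm]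
          · rw [Finset.sum_ite_eq' Finset.univ i (fun a => B b * x a)]
            simp
        · rw [Finset.sum_ite_eq' Finset.univ b (fun a => B i * x a)]
          simp
      rw [hsum]
      have hd0 : pd b (f i) 0 = d i b + (if i = b then c0 else 0) := by
        simp [hd]
      rw [hd0]
      rcases eq_or_ne i b with h | h
      · simp [h]; ring
      · simp [h, Ne.symm h]; ring
    have hzero := zero_pd_const (g := fun y => f i y - P y)
      ((hsmooth i).sub hPsmooth)
      (fun b y => by
        rw [pd_sub b ((hsmooth i).differentiable (by simp) y) (hPsmooth.differentiable (by simp) y),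
          hpdeq b y]
        ring) x
    have hP0 : P 0 = f i 0 := by simp [hP]
    rw [hP0] at hzero
    have : f i x = P x := by linarith
    rw [this, hP]
end
end

section
/- Any Killing vector field X on the n-sphere with metric Ψ·Σₖ(dxᵏ)², where Ψ(x) = 4/(1 + Σₖ(xᵏ)²)², has components Xⁱ(x) = xⁱ·(Σₖ bₖxᵏ) − (1/2)bᵢ·Σₖ(xᵏ)² + Σₖ f_{ik}xᵏ + (1/2)bᵢ for some constants bᵢ and a skew-symmetric matrix (f_{ik}). -/
noncomputable section
open scoped BigOperators

/-- Christoffel symbols `Γᵏᵢⱼ = (1/2Ψ)(δₖⱼ∂ᵢΨ + δₖᵢ∂ⱼΨ − δᵢⱼ∂ₖΨ)`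
of the conformal metric `h = Ψ·Σ(dxᵏ)²`. -/
def gammaConf {n : ℕ} (Ψ : (Fin n → ℝ) → ℝ) (k i j : Fin n) (x : Fin n → ℝ) : ℝ :=
  (1 / (2 * Ψ x)) *
    ((if k = j then (1:ℝ) else 0) * pd i Ψ x + (if k = i then (1:ℝ) else 0) * pd j Ψ x
      - (if i = j then (1:ℝ) else 0) * pd k Ψ x)

/-- Covariant derivative `∇ᵢAⱼ = ∂ᵢAⱼ − Σₖ Γᵏᵢⱼ Aₖ` of a 1-form for the metric `Ψ·Σ(dxᵏ)²`. -/
def covA {n : ℕ} (Ψ : (Fin n → ℝ) → ℝ) (A : Fin n → (Fin n → ℝ) → ℝ)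
    (i j : Fin n) (x : Fin n → ℝ) : ℝ :=
  pd i (A j) x - ∑ k, gammaConf Ψ k i j x * A k x

/-- Conformal factor of the round sphere metric in stereographic coordinates. -/
def psiS {n : ℕ} (x : Fin n → ℝ) : ℝ := 4 / (1 + ∑ k, (x k)^2)^2

namespace S4

variable {n : ℕ} {f g : (Fin n → ℝ) → ℝ} {x : Fin n → ℝ} {i j l : Fin n}

lemma contDiff_pd (hf : ContDiff ℝ (⊤ : ℕ∞) f) (i : Fin n) : ContDiff ℝ (⊤ : ℕ∞) (pd i f) := by
  have h := (hf.fderiv_right (m := (⊤ : ℕ∞)) (by simp)).clm_apply (contDiff_const (c := Pi.single i (1:ℝ)))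
  exact h

lemma pd_add (hf : DifferentiableAt ℝ f x) (hg : DifferentiableAt ℝ g x) :
    pd i (fun y => f y + g y) x = pd i f x + pd i g x := by
  unfold pd; rw [fderiv_fun_add hf hg]; rfl

lemma pd_sub (hf : DifferentiableAt ℝ f x) (hg : DifferentiableAt ℝ g x) :
    pd i (fun y => f y - g y) x = pd i f x - pd i g x := by
  unfold pd; rw [fderiv_fun_sub hf hg]; rfl

lemma pd_mul (hf : DifferentiableAt ℝ f x) (hg : DifferentiableAt ℝ g x) :
    pd i (fun y => f y * g y) x = pd i f x * g x + f x * pd i g x := by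
  unfold pd; rw [fderiv_fun_mul hf hg]; simp; ring

lemma pd_const (c : ℝ) : pd i (fun _ => c) x = 0 := by
  unfold pd; simp

lemma pd_const_mul (hf : DifferentiableAt ℝ f x) (c : ℝ) :
    pd i (fun y => c * f y) x = c * pd i f x := by
  unfold pd; rw [fderiv_const_mul hf]; rfl

lemma pd_inv (hg : DifferentiableAt ℝ g x) (hgx : g x ≠ 0) :
    pd i (fun y => (g y)⁻¹) x = -pd i g x / (g x)^2 := by
  have h := (hasDerivAt_inv hgx).comp_hasFDerivAt x hg.hasFDerivAt
  have h' : HasFDerivAt (fun y => (g y)⁻¹) (-(g x ^ 2)⁻¹ • fderiv ℝ g x) x := h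
  unfold pd
  rw [h'.fderiv]
  simp
  ring

lemma pd_div (hf : DifferentiableAt ℝ f x) (hg : DifferentiableAt ℝ g x) (hgx : g x ≠ 0) :
    pd i (fun y => f y / g y) x = (pd i f x * g x - f x * pd i g x) / (g x)^2 := by
  have h1 : pd i (fun y => f y * (g y)⁻¹) x = pd i f x * (g x)⁻¹ + f x * (-pd i g x / (g x)^2) := by
    rw [pd_mul (g := fun y => (g y)⁻¹) hf (hg.inv hgx), pd_inv hg hgx]
  simp only [div_eq_mul_inv]
  rw [h1]
  field_simp
  ring

lemma pd_sum {ι : Type*} (s : Finset ι) (F : ι → (Fin n → ℝ) → ℝ)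
    (h : ∀ k ∈ s, DifferentiableAt ℝ (F k) x) :
    pd i (fun y => ∑ k ∈ s, F k y) x = ∑ k ∈ s, pd i (F k) x := by
  unfold pd; rw [fderiv_fun_sum h]; simp

lemma pd_coord : pd i (fun y : Fin n → ℝ => y j) x = if i = j then 1 else 0 := by
  unfold pd
  have : (fun y : Fin n → ℝ => y j) = (ContinuousLinearMap.proj j : (Fin n → ℝ) →L[ℝ] ℝ) := rfl
  rw [this, ContinuousLinearMap.fderiv]
  simp [Pi.single_apply, eq_comm]

lemma diffAt_coord : DifferentiableAt ℝ (fun y : Fin n → ℝ => y j) x :=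
  (ContinuousLinearMap.proj j : (Fin n → ℝ) →L[ℝ] ℝ).differentiableAt

lemma contDiff_coord : ContDiff ℝ (⊤ : ℕ∞) (fun y : Fin n → ℝ => y j) :=
  (ContinuousLinearMap.proj j : (Fin n → ℝ) →L[ℝ] ℝ).contDiff

lemma pd_comm (hf : ContDiff ℝ (⊤ : ℕ∞) f) (l i : Fin n) (x : Fin n → ℝ) :
    pd l (pd i f) x = pd i (pd l f) x := by
  have hdf : Differentiable ℝ (fderiv ℝ f) :=
    (hf.fderiv_right (m := (⊤ : ℕ∞)) (by simp)).differentiable (by simp)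
  have key : ∀ a b : Fin n, pd a (pd b f) x
      = (fderiv ℝ (fderiv ℝ f) x) (Pi.single a 1) (Pi.single b 1) := by
    intro a b
    show pd a (fun y => fderiv ℝ f y (Pi.single b 1)) x = _
    unfold pd
    rw [fderiv_clm_apply (hdf x) (differentiableAt_const _)]
    simp
  have hsymm := second_derivative_symmetric (f' := fderiv ℝ f)
    (fun y => ((hf.differentiable (by simp)) y).hasFDerivAt)
    ((hdf x).hasFDerivAt) (Pi.single i 1) (Pi.single l 1)
  rw [key, key, hsymm]


/-! ### the conformal factor -/

def qf {n : ℕ} (x : Fin n → ℝ) : ℝ := 1 + ∑ k, (x k)^2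

lemma qf_pos (x : Fin n → ℝ) : 0 < qf x := by
  have : (0:ℝ) ≤ ∑ k, (x k)^2 := Finset.sum_nonneg fun k _ => sq_nonneg _
  unfold qf; linarith

lemma qf_ne (x : Fin n → ℝ) : qf x ≠ 0 := (qf_pos x).ne'

lemma contDiff_sq (k : Fin n) : ContDiff ℝ (⊤ : ℕ∞) (fun y : Fin n → ℝ => (y k)^2) := by
  have : (fun y : Fin n → ℝ => (y k)^2) = fun y => y k * y k := by
    funext y; ring
  rw [this]; exact (contDiff_coord).mul (contDiff_coord)

lemma contDiff_qf : ContDiff ℝ (⊤ : ℕ∞) (qf (n := n)) := by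
  unfold qf
  exact contDiff_const.add (ContDiff.sum fun k _ => contDiff_sq k)

lemma pd_sq (k : Fin n) : pd i (fun y => (y k)^2) x = (if i = k then 2 * x k else 0) := by
  have h : (fun y : Fin n → ℝ => (y k)^2) = fun y => y k * y k := by
    funext y; ring
  rw [h, pd_mul diffAt_coord diffAt_coord, pd_coord]
  by_cases hik : i = k <;> simp [hik] <;> ring

lemma pd_qf : pd i (qf (n := n)) x = 2 * x i := by
  unfold qf
  rw [show (fun y : Fin n → ℝ => 1 + ∑ k, (y k)^2) = (fun y : Fin n → ℝ => (1:ℝ) + (fun z => ∑ k, (z k)^2) y) from rfl]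
  rw [pd_add (differentiableAt_const 1) (by
    exact ((ContDiff.sum fun k _ => contDiff_sq k).differentiable (by simp)).differentiableAt)]
  rw [pd_const, pd_sum Finset.univ _ (fun k _ => ((contDiff_sq k).differentiable (by simp)).differentiableAt)]
  simp [pd_sq]

lemma psiS_eq (x : Fin n → ℝ) : psiS x = 4 / (qf x)^2 := rfl

lemma psiS_pos (x : Fin n → ℝ) : 0 < psiS x := by
  have := qf_pos x
  rw [psiS_eq]; positivity

lemma psiS_ne (x : Fin n → ℝ) : psiS x ≠ 0 := (psiS_pos x).ne'

lemma contDiff_psiS : ContDiff ℝ (⊤ : ℕ∞) (psiS (n := n)) := by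
  have : psiS (n := n) = fun x => 4 / (qf x)^2 := rfl
  rw [this]
  exact contDiff_const.div (contDiff_qf.pow 2) (fun x => pow_ne_zero 2 (qf_ne x))

lemma diffAt_psiS : DifferentiableAt ℝ (psiS (n := n)) x :=
  (contDiff_psiS.differentiable (by simp)).differentiableAt

lemma pd_psiS : pd i (psiS (n := n)) x = -16 * x i / (qf x)^3 := by
  have h : psiS (n := n) = fun y => 4 / (qf y * qf y) := by
    funext y; rw [psiS_eq]; ring_nf
  have hdq : DifferentiableAt ℝ (qf (n := n)) x :=
    (contDiff_qf.differentiable (by simp)).differentiableAt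
  rw [h, pd_div (g := fun y => qf y * qf y) (differentiableAt_const 4) (hdq.mul hdq) (mul_ne_zero (qf_ne x) (qf_ne x)), pd_const,
    pd_mul hdq hdq, pd_qf]
  have hq := qf_ne x
  field_simp
  ring

/-! ### simplified Killing equation -/

variable {X : Fin n → (Fin n → ℝ) → ℝ}

lemma diffAt_X (hs : ∀ i, ContDiff ℝ (⊤ : ℕ∞) (X i)) (k : Fin n) : DifferentiableAt ℝ (X k) x :=
  ((hs k).differentiable (by simp)).differentiableAt

lemma killing_simp (hs : ∀ i, ContDiff ℝ (⊤ : ℕ∞) (X i))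
    (hK : ∀ (i j : Fin n) (x : Fin n → ℝ),
      covA psiS (fun k y => psiS y * X k y) i j x
        + covA psiS (fun k y => psiS y * X k y) j i x = 0)
    (i j : Fin n) (x : Fin n → ℝ) :
    pd i (X j) x + pd j (X i) x
      = (if i = j then (1:ℝ) else 0) * (4 * (∑ k, x k * X k x) / qf x) := by
  have hq := qf_ne x
  have hΨ := psiS_ne x
  have hKx := hK i j x
  have hpdmul : ∀ (a b : Fin n), pd a (fun y => psiS y * X b y) x
      = pd a psiS x * X b x + psiS x * pd a (X b) x :=
    fun a b => pd_mul diffAt_psiS (diffAt_X hs b)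
  have hgam : ∀ (a b : Fin n), (∑ k, gammaConf psiS k a b x * (psiS x * X k x))
      = (1/2) * (pd a psiS x * X b x + pd b psiS x * X a x)
        - (if a = b then (1:ℝ) else 0) * (1/2) * ∑ k, pd k psiS x * X k x := by
    intro a b
    have h1 : ∀ k, gammaConf psiS k a b x * (psiS x * X k x)
        = (if k = b then (1:ℝ) else 0) * ((1/2) * (pd a psiS x * X k x))
          + (if k = a then (1:ℝ) else 0) * ((1/2) * (pd b psiS x * X k x))
          - (if a = b then (1:ℝ) else 0) * ((1/2) * (pd k psiS x * X k x)) := by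
      intro k
      unfold gammaConf
      field_simp
    rw [Finset.sum_congr rfl (fun k _ => h1 k)]
    rw [Finset.sum_sub_distrib, Finset.sum_add_distrib]
    simp only [ite_mul, one_mul, zero_mul, Finset.sum_ite_eq', Finset.mem_univ, if_true,
      ← Finset.mul_sum]
    by_cases hab : a = b
    · simp only [hab, eq_self_iff_true, if_true]
      rw [← Finset.mul_sum]
      ring
    · simp only [if_neg hab]
      simp only [zero_mul, sub_zero, Finset.sum_const_zero, mul_ite, mul_zero]
      ring
  unfold covA at hKx
  rw [hpdmul i j, hpdmul j i, hgam i j, hgam j i] at hKx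
  have hsum : (∑ k, pd k psiS x * X k x) = (-16 / (qf x)^3) * ∑ k, x k * X k x := by
    rw [Finset.mul_sum]
    refine Finset.sum_congr rfl fun k _ => ?_
    rw [pd_psiS]; ring
  rw [hsum] at hKx
  rw [pd_psiS, pd_psiS, psiS_eq] at hKx
  have hji : (if j = i then (1:ℝ) else 0) = (if i = j then (1:ℝ) else 0) := by
    simp [eq_comm]
  rw [hji] at hKx
  have key : (4/(qf x)^2) * (pd i (X j) x + pd j (X i) x)
      = (if i = j then (1:ℝ) else 0) * (16/(qf x)^3) * (∑ k, x k * X k x) := by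
    linear_combination hKx
  field_simp at key
  by_cases hij : i = j
  · rw [if_pos hij] at key ⊢
    rw [one_mul, eq_div_iff hq]
    have h4 : (4:ℝ) * (qf x)^2 ≠ 0 := by positivity
    apply mul_right_cancel₀ h4
    linear_combination (qf x)^2 * key
  · rw [if_neg hij] at key ⊢
    rw [zero_mul]
    have h3 : (4:ℝ) * (qf x)^3 ≠ 0 := by positivity
    have h5 : (pd i (X j) x + pd j (X i) x) * (4 * (qf x)^3) = 0 * (4 * (qf x)^3) := by
      linear_combination (qf x)^2 * key
    exact mul_right_cancel₀ h3 h5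


/-! ### linear/quadratic helpers -/

lemma contDiff_linsum (c : Fin n → ℝ) : ContDiff ℝ (⊤ : ℕ∞) (fun y : Fin n → ℝ => ∑ k, c k * y k) :=
  ContDiff.sum fun k _ => contDiff_const.mul contDiff_coord

lemma contDiff_sumsq : ContDiff ℝ (⊤ : ℕ∞) (fun y : Fin n → ℝ => ∑ k, (y k)^2) :=
  ContDiff.sum fun k _ => contDiff_sq k

lemma pd_linsum (c : Fin n → ℝ) : pd i (fun y : Fin n → ℝ => ∑ k, c k * y k) x = c i := by
  rw [pd_sum Finset.univ (fun k => fun y => c k * y k)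
    (fun k _ => (differentiableAt_const (c k)).mul diffAt_coord)]
  have : ∀ k, pd i (fun y : Fin n → ℝ => c k * y k) x = c k * (if i = k then 1 else 0) := by
    intro k
    rw [pd_const_mul diffAt_coord, pd_coord]
  simp only [this, mul_ite, mul_one, mul_zero, Finset.sum_ite_eq, Finset.mem_univ, if_true]

lemma pd_sumsq : pd i (fun y : Fin n → ℝ => ∑ k, (y k)^2) x = 2 * x i := by
  rw [pd_sum Finset.univ (fun k => fun y => (y k)^2)
    (fun k _ => ((contDiff_sq k).differentiable (by simp)).differentiableAt)]
  simp only [pd_sq, Finset.sum_ite_eq, Finset.mem_univ, if_true]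

lemma cont_zero_ext (hn : 1 ≤ n) {g : (Fin n → ℝ) → ℝ} (hg : Continuous g)
    (h : ∀ x : Fin n → ℝ, x ≠ 0 → g x = 0) : g 0 = 0 := by
  have hpath : Continuous (fun t : ℝ => g (fun _ => t)) :=
    hg.comp (by continuity)
  have h1 : Filter.Tendsto (fun t : ℝ => g (fun _ => t))
      (nhdsWithin 0 {(0:ℝ)}ᶜ) (nhds (g (fun _ => (0:ℝ)))) :=
    (hpath.tendsto 0).mono_left nhdsWithin_le_nhds
  have h2 : (fun t : ℝ => g (fun _ => t)) =ᶠ[nhdsWithin (0:ℝ) {(0:ℝ)}ᶜ] (fun _ => (0:ℝ)) := by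
    filter_upwards [self_mem_nhdsWithin] with t ht
    apply h
    intro hc
    apply ht
    have := congrFun hc ⟨0, by omega⟩
    simpa using this
  have h3 : Filter.Tendsto (fun t : ℝ => g (fun _ => t))
      (nhdsWithin 0 {(0:ℝ)}ᶜ) (nhds 0) :=
    Filter.Tendsto.congr' h2.symm tendsto_const_nhds
  have h4 : g (fun _ => (0:ℝ)) = 0 := tendsto_nhds_unique h1 h3
  exact h4

lemma const_of_pd {g : (Fin n → ℝ) → ℝ} (hg : ContDiff ℝ (⊤ : ℕ∞) g)
    (h0 : ∀ (l : Fin n) (y : Fin n → ℝ), pd l g y = 0) (x : Fin n → ℝ) : g x = g 0 := by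
  have hd : Differentiable ℝ g := hg.differentiable (by simp)
  have hf : ∀ y, fderiv ℝ g y = 0 := by
    intro y
    apply ContinuousLinearMap.ext
    intro v
    have hv : v = ∑ i : Fin n, v i • (Pi.single i 1 : Fin n → ℝ) := by
      funext j
      rw [Finset.sum_apply]
      simp [Pi.single_apply]
    rw [hv, map_sum]
    simp only [map_smul]
    have hz : ∀ i : Fin n, fderiv ℝ g y (Pi.single i 1) = 0 := fun i => h0 i y
    simp [hz]
  exact is_const_of_fderiv_eq_zero hd hf x 0

/-! ### the uniqueness core -/

variable (Y : Fin n → (Fin n → ℝ) → ℝ)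

def uY : (Fin n → ℝ) → ℝ := fun x => ∑ k, x k * Y k x

def phiY : (Fin n → ℝ) → ℝ := fun x => 4 * uY Y x / qf x

def DY (i : Fin n) : (Fin n → ℝ) → ℝ := pd i (phiY Y)

def EY (l i : Fin n) : (Fin n → ℝ) → ℝ := pd l (DY Y i)

variable {Y}

section core

variable (hYs : ∀ i, ContDiff ℝ (⊤ : ℕ∞) (Y i))

include hYs

lemma diffAt_Y (k : Fin n) : DifferentiableAt ℝ (Y k) x :=
  ((hYs k).differentiable (by simp)).differentiableAt

lemma contDiff_uY : ContDiff ℝ (⊤ : ℕ∞) (uY Y) :=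
  ContDiff.sum fun k _ => contDiff_coord.mul (hYs k)

lemma contDiff_phiY : ContDiff ℝ (⊤ : ℕ∞) (phiY Y) :=
  (contDiff_const.mul (contDiff_uY hYs)).div contDiff_qf qf_ne

lemma contDiff_DY (i : Fin n) : ContDiff ℝ (⊤ : ℕ∞) (DY Y i) :=
  contDiff_pd (contDiff_phiY hYs) i

lemma contDiff_EY (l i : Fin n) : ContDiff ℝ (⊤ : ℕ∞) (EY Y l i) :=
  contDiff_pd (contDiff_DY hYs i) l

lemma diffAt_uY : DifferentiableAt ℝ (uY Y) x :=
  ((contDiff_uY hYs).differentiable (by simp)).differentiableAt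

lemma diffAt_pdY (j k : Fin n) : DifferentiableAt ℝ (pd j (Y k)) x :=
  ((contDiff_pd (hYs k) j).differentiable (by simp)).differentiableAt

lemma pd_uY : pd i (uY Y) x = Y i x + ∑ k, x k * pd i (Y k) x := by
  unfold uY
  rw [pd_sum Finset.univ (fun k => fun y => y k * Y k y)
    (fun k _ => diffAt_coord.mul (diffAt_Y hYs k))]
  have : ∀ k, pd i (fun y => y k * Y k y) x
      = (if i = k then 1 else 0) * Y k x + x k * pd i (Y k) x := by
    intro k
    rw [pd_mul diffAt_coord (diffAt_Y hYs k), pd_coord]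
  rw [Finset.sum_congr rfl fun k _ => this k, Finset.sum_add_distrib]
  simp only [ite_mul, one_mul, zero_mul, Finset.sum_ite_eq, Finset.mem_univ, if_true]

lemma pd_phiY : pd i (phiY Y) x
    = (4 * (Y i x + ∑ k, x k * pd i (Y k) x) * qf x - 4 * uY Y x * (2 * x i)) / (qf x)^2 := by
  unfold phiY
  rw [pd_div (((contDiff_const.mul (contDiff_uY hYs)).differentiable (by simp)).differentiableAt)
    ((contDiff_qf.differentiable (by simp)).differentiableAt) (qf_ne x),
    pd_const_mul (diffAt_uY hYs), pd_uY hYs, pd_qf]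

lemma DY_zero (hY0 : ∀ k, Y k 0 = 0) (i : Fin n) : DY Y i 0 = 0 := by
  unfold DY
  rw [pd_phiY hYs]
  simp [hY0, uY, qf]

section killed

variable (hKY : ∀ (i j : Fin n) (x : Fin n → ℝ),
    pd i (Y j) x + pd j (Y i) x = (if i = j then (1:ℝ) else 0) * phiY Y x)

include hKY

lemma H_killing (i j k : Fin n) (x : Fin n → ℝ) :
    pd i (pd j (Y k)) x + pd i (pd k (Y j)) x = (if j = k then (1:ℝ) else 0) * DY Y i x := by
  have hfun : (fun y => pd j (Y k) y + pd k (Y j) y)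
      = (fun y => (if j = k then (1:ℝ) else 0) * phiY Y y) := funext fun y => hKY j k y
  have h1 : pd i (fun y => pd j (Y k) y + pd k (Y j) y) x
      = pd i (pd j (Y k)) x + pd i (pd k (Y j)) x :=
    pd_add (diffAt_pdY hYs j k) (diffAt_pdY hYs k j)
  rw [← h1, hfun, pd_const_mul (((contDiff_phiY hYs).differentiable (by simp)).differentiableAt)]
  rfl

lemma H_eq (i j k : Fin n) (x : Fin n → ℝ) :
    pd i (pd j (Y k)) x = (1/2) * ((if j = k then (1:ℝ) else 0) * DY Y i x
      + (if i = k then (1:ℝ) else 0) * DY Y j x - (if i = j then (1:ℝ) else 0) * DY Y k x) := by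
  have h1 := H_killing hYs hKY i j k x
  have h2 := H_killing hYs hKY j i k x
  have h3 := H_killing hYs hKY k i j x
  have s1 : pd i (pd k (Y j)) x = pd k (pd i (Y j)) x := pd_comm (hYs j) i k x
  have s2 : pd j (pd k (Y i)) x = pd k (pd j (Y i)) x := pd_comm (hYs i) j k x
  have s3 : pd i (pd j (Y k)) x = pd j (pd i (Y k)) x := pd_comm (hYs k) i j x
  linear_combination h1/2 + h2/2 - h3/2 + s3/2 - s1/2 - s2/2

omit hKY

lemma E_symm (l i : Fin n) (x : Fin n → ℝ) : EY Y l i x = EY Y i l x :=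
  pd_comm (contDiff_phiY hYs) l i x

lemma diffAt_DY (i : Fin n) : DifferentiableAt ℝ (DY Y i) x :=
  ((contDiff_DY hYs i).differentiable (by simp)).differentiableAt

include hKY

lemma H_fun_pd (l i j k : Fin n) (x : Fin n → ℝ) :
    pd l (fun y => pd i (pd j (Y k)) y) x
      = (1/2) * ((if j = k then (1:ℝ) else 0) * EY Y l i x
        + (if i = k then (1:ℝ) else 0) * EY Y l j x - (if i = j then (1:ℝ) else 0) * EY Y l k x) := by
  have hfun : (fun y => pd i (pd j (Y k)) y)
      = (fun y => (1/2) * ((if j = k then (1:ℝ) else 0) * DY Y i y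
        + (if i = k then (1:ℝ) else 0) * DY Y j y - (if i = j then (1:ℝ) else 0) * DY Y k y)) :=
    funext fun y => H_eq hYs hKY i j k y
  rw [hfun]
  rw [pd_const_mul (by
    exact (((differentiableAt_const _).mul (diffAt_DY hYs i)).add
      ((differentiableAt_const _).mul (diffAt_DY hYs j))).sub
      ((differentiableAt_const _).mul (diffAt_DY hYs k)))]
  rw [pd_sub (by exact (((differentiableAt_const _).mul (diffAt_DY hYs i)).add ((differentiableAt_const _).mul (diffAt_DY hYs j))))
      (by exact (differentiableAt_const _).mul (diffAt_DY hYs k)),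
    pd_add (by exact (differentiableAt_const _).mul (diffAt_DY hYs i))
      (by exact (differentiableAt_const _).mul (diffAt_DY hYs j)),
    pd_const_mul (diffAt_DY hYs i), pd_const_mul (diffAt_DY hYs j),
    pd_const_mul (diffAt_DY hYs k)]
  rfl

lemma star_rel (l i j k : Fin n) (x : Fin n → ℝ) :
    (if i = k then (1:ℝ) else 0) * EY Y l j x - (if i = j then (1:ℝ) else 0) * EY Y l k x
      = (if l = k then (1:ℝ) else 0) * EY Y i j x - (if l = j then (1:ℝ) else 0) * EY Y i k x := by
  have c1 := H_fun_pd hYs hKY l i j k x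
  have c2 := H_fun_pd hYs hKY i l j k x
  have hcomm : pd l (fun y => pd i (pd j (Y k)) y) x
      = pd i (fun y => pd l (pd j (Y k)) y) x :=
    pd_comm (contDiff_pd (hYs k) j) l i x
  have he := E_symm hYs l i x
  linear_combination (-2) * c1 + 2 * c2 + 2 * hcomm - (if j = k then (1:ℝ) else 0) * he

lemma trace_sum (l j : Fin n) (x : Fin n → ℝ) :
    ((n:ℝ) - 2) * EY Y l j x
      = - (if l = j then (∑ i, EY Y i i x) else 0) := by
  have hsum : ∑ i, ((if i = i then (1:ℝ) else 0) * EY Y l j x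
        - (if i = j then (1:ℝ) else 0) * EY Y l i x)
      = ∑ i, ((if l = i then (1:ℝ) else 0) * EY Y i j x
        - (if l = j then (1:ℝ) else 0) * EY Y i i x) :=
    Finset.sum_congr rfl fun i _ => star_rel hYs hKY l i j i x
  rw [Finset.sum_sub_distrib, Finset.sum_sub_distrib, ← Finset.mul_sum] at hsum
  simp only [eq_self_iff_true, if_true, one_mul, ite_mul, zero_mul,
    Finset.sum_ite_eq, Finset.sum_ite_eq', Finset.mem_univ, if_true,
    Finset.sum_const, Finset.card_univ, Fintype.card_fin, nsmul_eq_mul] at hsum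
  linear_combination hsum

lemma T_zero (hn : 2 ≤ n) (x : Fin n → ℝ) : ∑ i, EY Y i i x = 0 := by
  have h : ∑ j, ((n:ℝ) - 2) * EY Y j j x
      = ∑ j : Fin n, - (if j = j then (∑ i, EY Y i i x) else 0) :=
    Finset.sum_congr rfl fun j _ => trace_sum hYs hKY j j x
  rw [← Finset.mul_sum] at h
  simp only [eq_self_iff_true, if_true, Finset.sum_neg_distrib,
    Finset.sum_const, Finset.card_univ, Fintype.card_fin, nsmul_eq_mul] at h
  have hcast : (2:ℝ) ≤ (n:ℝ) := by exact_mod_cast hn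
  have h4 : (2*(n:ℝ)-2) * ∑ i, EY Y i i x = 0 := by linarith
  rcases mul_eq_zero.mp h4 with h5 | h5
  · exact absurd h5 (ne_of_gt (by linarith))
  · exact h5

lemma E_vanish_big (hn : 3 ≤ n) (l j : Fin n) (x : Fin n → ℝ) : EY Y l j x = 0 := by
  have h := trace_sum hYs hKY l j x
  rw [T_zero hYs hKY (by omega : 2 ≤ n) x] at h
  have hn' : ((n:ℝ) - 2) ≠ 0 := by
    have : (3:ℝ) ≤ (n:ℝ) := by exact_mod_cast hn
    linarith
  rw [ite_self, neg_zero] at h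
  exact (mul_eq_zero.mp h).resolve_left hn'

/-! ### the Euler identity -/

omit hKY

omit hYs in
lemma qphi (x : Fin n → ℝ) : qf x * phiY Y x = 4 * uY Y x := by
  unfold phiY
  rw [mul_comm, div_mul_cancel₀ _ (qf_ne x)]

lemma pd_pd_uY (l i : Fin n) (x : Fin n → ℝ) :
    pd l (fun y => pd i (uY Y) y) x
      = pd l (Y i) x + pd i (Y l) x + ∑ k, x k * pd l (pd i (Y k)) x := by
  have hfun : (fun y => pd i (uY Y) y) = fun y => Y i y + ∑ k, y k * pd i (Y k) y :=
    funext fun y => pd_uY hYs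
  rw [hfun, pd_add (diffAt_Y hYs i) (by
    exact ((ContDiff.sum fun k _ => contDiff_coord.mul (contDiff_pd (hYs k) i)).differentiable
      (by simp)).differentiableAt)]
  rw [pd_sum Finset.univ (fun k => fun y => y k * pd i (Y k) y)
    (fun k _ => diffAt_coord.mul (diffAt_pdY hYs i k))]
  have : ∀ k, pd l (fun y => y k * pd i (Y k) y) x
      = (if l = k then (1:ℝ) else 0) * pd i (Y k) x + x k * pd l (fun y => pd i (Y k) y) x := by
    intro k
    rw [pd_mul diffAt_coord (diffAt_pdY hYs i k), pd_coord]
  rw [Finset.sum_congr rfl fun k _ => this k, Finset.sum_add_distrib]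
  simp only [ite_mul, one_mul, zero_mul, Finset.sum_ite_eq, Finset.mem_univ, if_true]
  ring

lemma diffAt_phiY : DifferentiableAt ℝ (phiY Y) x :=
  ((contDiff_phiY hYs).differentiable (by simp)).differentiableAt

lemma F1 (i : Fin n) (x : Fin n → ℝ) :
    2 * x i * phiY Y x + qf x * DY Y i x = 4 * pd i (uY Y) x := by
  have hfun : (fun y => qf y * phiY Y y) = fun y => 4 * uY Y y := funext fun y => qphi y
  have h1 : pd i (fun y => qf y * phiY Y y) x
      = 2 * x i * phiY Y x + qf x * DY Y i x := by
    rw [pd_mul ((contDiff_qf.differentiable (by simp)).differentiableAt) (diffAt_phiY hYs), pd_qf]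
    rfl
  have h2 : pd i (fun y => 4 * uY Y y) x = 4 * pd i (uY Y) x :=
    pd_const_mul (diffAt_uY hYs) 4
  rw [← h1, hfun, h2]

include hKY

lemma F2 (l i : Fin n) (x : Fin n → ℝ) :
    2 * (if l = i then (1:ℝ) else 0) * phiY Y x + 2 * x i * DY Y l x
        + (2 * x l * DY Y i x + qf x * EY Y l i x)
      = 4 * (pd l (Y i) x + pd i (Y l) x + ∑ k, x k * pd l (pd i (Y k)) x) := by
  have hfun : (fun y => (2 * y i) * phiY Y y + qf y * DY Y i y) = fun y => 4 * pd i (uY Y) y :=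
    funext fun y => by
      have := F1 hYs i y
      simpa [mul_assoc] using this
  have hL : pd l (fun y => (2 * y i) * phiY Y y + qf y * DY Y i y) x
      = (2 * (if l = i then (1:ℝ) else 0)) * phiY Y x + (2 * x i) * DY Y l x
        + (2 * x l * DY Y i x + qf x * EY Y l i x) := by
    rw [pd_add (by
        exact ((contDiff_const.mul contDiff_coord).mul (contDiff_phiY hYs)).differentiable (by simp)
          |>.differentiableAt)
      (by
        exact (contDiff_qf.mul (contDiff_DY hYs i)).differentiable (by simp) |>.differentiableAt)]
    rw [pd_mul (by
        exact ((contDiff_const.mul contDiff_coord).differentiable (by simp)).differentiableAt)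
      (diffAt_phiY hYs)]
    rw [pd_mul ((contDiff_qf.differentiable (by simp)).differentiableAt) (diffAt_DY hYs i)]
    rw [pd_const_mul diffAt_coord, pd_coord, pd_qf]
    rfl
  have hR : pd l (fun y => 4 * pd i (uY Y) y) x
      = 4 * (pd l (Y i) x + pd i (Y l) x + ∑ k, x k * pd l (pd i (Y k)) x) := by
    rw [pd_const_mul (by
      exact ((contDiff_pd (contDiff_uY hYs) i).differentiable (by simp)).differentiableAt)]
    rw [show pd l (fun y => pd i (uY Y) y) x
        = pd l (Y i) x + pd i (Y l) x + ∑ k, x k * pd l (pd i (Y k)) x from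
      pd_pd_uY hYs l i x]
  rw [← hL, hfun, hR]

lemma qE_diag (i : Fin n) (x : Fin n → ℝ) :
    qf x * EY Y i i x = 2 * phiY Y x - 2 * ∑ k, x k * DY Y k x := by
  have h := F2 hYs hKY i i x
  rw [if_pos rfl] at h
  have hk := hKY i i x
  rw [if_pos rfl, one_mul] at hk
  have hH : ∀ k, x k * pd i (pd i (Y k)) x
      = (if i = k then x k * DY Y i x else 0) - (1/2) * (x k * DY Y k x) := by
    intro k
    have h2 := H_eq hYs hKY i i k x
    rw [if_pos rfl] at h2
    by_cases hik : i = k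
    · rw [if_pos hik] at h2 ⊢; rw [h2]; rw [← hik]; ring
    · rw [if_neg hik] at h2 ⊢; rw [h2]; ring
  have hs : ∑ k, x k * pd i (pd i (Y k)) x
      = x i * DY Y i x - (1/2) * ∑ k, x k * DY Y k x := by
    rw [Finset.sum_congr rfl fun k _ => hH k, Finset.sum_sub_distrib, ← Finset.mul_sum,
      Finset.sum_ite_eq, if_pos (Finset.mem_univ i)]
  rw [hs] at h
  linear_combination h + 4 * hk

lemma euler (hn : 2 ≤ n) (x : Fin n → ℝ) : ∑ k, x k * DY Y k x = phiY Y x := by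
  have h : ∑ i, (qf x * EY Y i i x)
      = ∑ i : Fin n, (2 * phiY Y x - 2 * ∑ k, x k * DY Y k x) :=
    Finset.sum_congr rfl fun i _ => qE_diag hYs hKY i x
  rw [← Finset.mul_sum, T_zero hYs hKY hn x, mul_zero, Finset.sum_const,
    Finset.card_univ, Fintype.card_fin, nsmul_eq_mul] at h
  have hn0 : (0:ℝ) < (n:ℝ) := by
    have : (2:ℝ) ≤ (n:ℝ) := by exact_mod_cast hn
    linarith
  have h2 : (n:ℝ) * (2 * phiY Y x - 2 * ∑ k, x k * DY Y k x) = 0 := h.symm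
  rcases mul_eq_zero.mp h2 with h3 | h3
  · exact absurd h3 hn0.ne'
  · linarith

omit hKY

lemma pd_xdotg (g : Fin n → (Fin n → ℝ) → ℝ) (hg : ∀ k, ContDiff ℝ (⊤ : ℕ∞) (g k))
    (i : Fin n) (x : Fin n → ℝ) :
    pd i (fun y => ∑ k, y k * g k y) x = g i x + ∑ k, x k * pd i (g k) x := by
  rw [pd_sum Finset.univ (fun k => fun y => y k * g k y)
    (fun k _ => diffAt_coord.mul (((hg k).differentiable (by simp)).differentiableAt))]
  have : ∀ k, pd i (fun y => y k * g k y) x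
      = (if i = k then (1:ℝ) else 0) * g k x + x k * pd i (g k) x := by
    intro k
    rw [pd_mul diffAt_coord (((hg k).differentiable (by simp)).differentiableAt), pd_coord]
  rw [Finset.sum_congr rfl fun k _ => this k, Finset.sum_add_distrib]
  simp only [ite_mul, one_mul, zero_mul, Finset.sum_ite_eq, Finset.mem_univ, if_true]

include hKY

lemma eulerE (hn : 2 ≤ n) (i : Fin n) (x : Fin n → ℝ) :
    ∑ k, x k * EY Y i k x = 0 := by
  have hfun : (fun y => ∑ k, y k * DY Y k y) = (fun y => phiY Y y) :=
    funext fun y => euler hYs hKY hn y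
  have h1 : pd i (fun y => ∑ k, y k * DY Y k y) x
      = DY Y i x + ∑ k, x k * EY Y i k x :=
    pd_xdotg hYs (g := DY Y) (contDiff_DY hYs) i x
  rw [hfun] at h1
  have h2 : pd i (fun y => phiY Y y) x = DY Y i x := rfl
  rw [h2] at h1
  linarith [h1]

lemma E_vanish_two (hn2 : n = 2) (l j : Fin n) (x : Fin n → ℝ) : EY Y l j x = 0 := by
  subst hn2
  have key : ∀ (l j : Fin 2) (x : Fin 2 → ℝ), x ≠ 0 → EY Y l j x = 0 := by
    intro l j x hx
    have hT := T_zero hYs hKY (le_refl 2) x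
    have he0 := eulerE hYs hKY (le_refl 2) 0 x
    have he1 := eulerE hYs hKY (le_refl 2) 1 x
    have hsym := E_symm hYs 1 0 x
    rw [Fin.sum_univ_two] at hT he0 he1
    have hr : 0 < x 0 ^ 2 + x 1 ^ 2 := by
      rcases (by
        by_contra hcon
        push_neg at hcon
        apply hx
        funext i
        fin_cases i
        · exact hcon.1
        · exact hcon.2 : x 0 ≠ 0 ∨ x 1 ≠ 0) with h | h
      · positivity
      · positivity
    have ha : EY Y 0 0 x * (x 0 ^ 2 + x 1 ^ 2) = 0 := by
      linear_combination x 0 * he0 - x 1 * he1 + x 0 * x 1 * hsym + (x 1)^2 * hT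
    have hb : EY Y 0 1 x * (x 0 ^ 2 + x 1 ^ 2) = 0 := by
      linear_combination x 1 * he0 + x 0 * he1 - x 0 * x 1 * hT - (x 0)^2 * hsym
    have ha0 : EY Y 0 0 x = 0 := by
      rcases mul_eq_zero.mp ha with h | h
      · exact h
      · exact absurd h hr.ne'
    have hb0 : EY Y 0 1 x = 0 := by
      rcases mul_eq_zero.mp hb with h | h
      · exact h
      · exact absurd h hr.ne'
    have hc0 : EY Y 1 0 x = 0 := by rw [hsym]; exact hb0
    have hd0 : EY Y 1 1 x = 0 := by linarith
    fin_cases l <;> fin_cases j <;> assumption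
  by_cases hx : x = 0
  · subst hx
    exact cont_zero_ext (by omega) ((contDiff_EY hYs l j).continuous) (key l j)
  · exact key l j x hx

lemma Y_zero (hn : 2 ≤ n) (hY0 : ∀ k, Y k 0 = 0)
    (hYd0 : ∀ l k, pd l (Y k) 0 = 0) (k : Fin n) (x : Fin n → ℝ) : Y k x = 0 := by
  have hE : ∀ (l j : Fin n) (y : Fin n → ℝ), EY Y l j y = 0 := by
    rcases lt_or_ge n 3 with h3 | h3
    · exact fun l j y => E_vanish_two hYs hKY (by omega) l j y
    · exact fun l j y => E_vanish_big hYs hKY h3 l j y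
  have hD : ∀ (i : Fin n) (y : Fin n → ℝ), DY Y i y = 0 := by
    intro i y
    have h := const_of_pd (contDiff_DY hYs i) (fun l z => hE l i z) y
    rw [h, DY_zero hYs hY0 i]
  have hH : ∀ (i j kk : Fin n) (y : Fin n → ℝ), pd i (pd j (Y kk)) y = 0 := by
    intro i j kk y
    rw [H_eq hYs hKY]
    simp [hD]
  have hW : ∀ (j kk : Fin n) (y : Fin n → ℝ), pd j (Y kk) y = 0 := by
    intro j kk y
    have h := const_of_pd (contDiff_pd (hYs kk) j) (fun i z => hH i j kk z) y
    rw [h, hYd0 j kk]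
  have h := const_of_pd (hYs k) (fun j z => hW j k z) x
  rw [h, hY0 k]

end killed

end core

/-! ### the candidate Killing field -/

def Pc (b : Fin n → ℝ) (fm : Fin n → Fin n → ℝ) : Fin n → (Fin n → ℝ) → ℝ :=
  fun i y => y i * (∑ k, b k * y k) - (1/2) * b i * (∑ k, (y k)^2)
    + (∑ k, fm i k * y k) + (1/2) * b i

lemma contDiff_Pc (b : Fin n → ℝ) (fm : Fin n → Fin n → ℝ) (i : Fin n) :
    ContDiff ℝ (⊤ : ℕ∞) (Pc b fm i) := by
  unfold Pc
  exact (((contDiff_coord.mul (contDiff_linsum b)).sub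
    (contDiff_const.mul contDiff_sumsq)).add (contDiff_linsum (fm i))).add contDiff_const

lemma pd_Pc (b : Fin n → ℝ) (fm : Fin n → Fin n → ℝ) (l i : Fin n) (x : Fin n → ℝ) :
    pd l (Pc b fm i) x
      = (if l = i then (∑ k, b k * x k) else 0) + x i * b l - b i * x l + fm i l := by
  have d1 : DifferentiableAt ℝ (fun y : Fin n → ℝ => y i * (∑ k, b k * y k)) x :=
    ((contDiff_coord.mul (contDiff_linsum b)).differentiable (by simp)).differentiableAt
  have d2 : DifferentiableAt ℝ (fun y : Fin n → ℝ => (1/2) * b i * (∑ k, (y k)^2)) x :=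
    ((contDiff_const.mul contDiff_sumsq).differentiable (by simp)).differentiableAt
  have d3 : DifferentiableAt ℝ (fun y : Fin n → ℝ => ∑ k, fm i k * y k) x :=
    ((contDiff_linsum (fm i)).differentiable (by simp)).differentiableAt
  have e1 : pd l (fun y : Fin n → ℝ => y i * (∑ k, b k * y k)) x
      = (if l = i then (1:ℝ) else 0) * (∑ k, b k * x k) + x i * b l := by
    rw [pd_mul diffAt_coord (((contDiff_linsum b).differentiable (by simp)).differentiableAt),
      pd_coord, pd_linsum]
  have e2 : pd l (fun y : Fin n → ℝ => (1/2) * b i * (∑ k, (y k)^2)) x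
      = (1/2) * b i * (2 * x l) := by
    rw [pd_const_mul (((contDiff_sumsq (n := n)).differentiable (by simp)).differentiableAt),
      pd_sumsq]
  have e3 : pd l (fun y : Fin n → ℝ => ∑ k, fm i k * y k) x = fm i l := pd_linsum (fm i)
  unfold Pc
  rw [pd_add (by exact (d1.sub d2).add d3) (differentiableAt_const _),
    pd_add (by exact d1.sub d2) d3, pd_sub d1 d2, e1, e2, e3, pd_const]
  by_cases hli : l = i
  · rw [if_pos hli, if_pos hli]; ring
  · rw [if_neg hli, if_neg hli]; ring

lemma xPc (b : Fin n → ℝ) (fm : Fin n → Fin n → ℝ)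
    (hskew : ∀ i k, fm k i = - fm i k) (x : Fin n → ℝ) :
    ∑ k, x k * Pc b fm k x = (1/2) * (∑ k, b k * x k) * qf x := by
  have hterm : ∀ k, x k * Pc b fm k x
      = (x k)^2 * (∑ l, b l * x l) - (1/2) * (b k * x k) * (∑ l, (x l)^2)
        + (∑ l, x k * (fm k l * x l)) + (1/2) * (b k * x k) := by
    intro k
    have : x k * (∑ l, fm k l * x l) = ∑ l, x k * (fm k l * x l) := Finset.mul_sum _ _ _
    simp only [Pc]
    rw [← this]
    ring
  have hskew0 : ∑ k, ∑ l, x k * (fm k l * x l) = 0 := by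
    have hcomm : ∑ k, ∑ l, x k * (fm k l * x l) = ∑ l, ∑ k, x k * (fm k l * x l) :=
      Finset.sum_comm
    have hneg : ∀ l k, x k * (fm k l * x l) = -(x l * (fm l k * x k)) := by
      intro l k
      rw [hskew k l]
      ring
    have h2 : ∑ l, ∑ k, x k * (fm k l * x l) = - ∑ k, ∑ l, x k * (fm k l * x l) := by
      rw [Finset.sum_congr rfl fun l _ => Finset.sum_congr rfl fun k _ => hneg l k]
      simp only [Finset.sum_neg_distrib]
    have := hcomm.trans h2
    linarith
  rw [Finset.sum_congr rfl fun k _ => hterm k]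
  rw [Finset.sum_add_distrib, Finset.sum_add_distrib, Finset.sum_sub_distrib, hskew0]
  have s1 : ∑ k, (x k)^2 * (∑ l, b l * x l) = (∑ k, (x k)^2) * (∑ l, b l * x l) :=
    (Finset.sum_mul _ _ _).symm
  have s2 : ∑ k, (1/2) * (b k * x k) * (∑ l, (x l)^2)
      = ((1/2) * ∑ k, b k * x k) * (∑ l, (x l)^2) := by
    rw [← Finset.sum_mul, ← Finset.mul_sum]
  have s3 : ∑ k, (1/2) * (b k * x k) = (1/2) * ∑ k, b k * x k := (Finset.mul_sum _ _ _).symm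
  rw [s1, s2, s3]
  unfold qf
  ring

/-! ### final assembly -/

lemma X_eq_Pc {X : Fin n → (Fin n → ℝ) → ℝ} (hn : 2 ≤ n)
    (hs : ∀ i, ContDiff ℝ (⊤ : ℕ∞) (X i))
    (hK : ∀ (i j : Fin n) (x : Fin n → ℝ),
      covA psiS (fun k y => psiS y * X k y) i j x
        + covA psiS (fun k y => psiS y * X k y) j i x = 0)
    (hskew : ∀ i k, (fun i k => pd k (X i) 0) k i = - (fun i k => pd k (X i) 0) i k)
    (i : Fin n) (x : Fin n → ℝ) :
    X i x = Pc (fun k => 2 * X k 0) (fun i k => pd k (X i) 0) i x := by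
  set b : Fin n → ℝ := fun k => 2 * X k 0 with hb
  set fm : Fin n → Fin n → ℝ := fun i k => pd k (X i) 0 with hfm
  set Y : Fin n → (Fin n → ℝ) → ℝ := fun k y => X k y - Pc b fm k y with hY
  have hYs : ∀ k, ContDiff ℝ (⊤ : ℕ∞) (Y k) := fun k => (hs k).sub (contDiff_Pc b fm k)
  have hpdY : ∀ (l k : Fin n) (y : Fin n → ℝ), pd l (Y k) y
      = pd l (X k) y - ((if l = k then (∑ j, b j * y j) else 0)
        + y k * b l - b k * y l + fm k l) := by
    intro l k y
    have : pd l (Y k) y = pd l (X k) y - pd l (Pc b fm k) y :=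
      pd_sub ((( hs k).differentiable (by simp)).differentiableAt)
        (((contDiff_Pc b fm k).differentiable (by simp)).differentiableAt)
    rw [this, pd_Pc]
  have hY0 : ∀ k, Y k 0 = 0 := by
    intro k
    show X k 0 - Pc b fm k 0 = 0
    simp [Pc, hb]
  have hYd0 : ∀ (l k : Fin n), pd l (Y k) 0 = 0 := by
    intro l k
    rw [hpdY l k 0]
    simp [hfm, hb]
  have hks := killing_simp hs hK
  have hKY : ∀ (i j : Fin n) (y : Fin n → ℝ),
      pd i (Y j) y + pd j (Y i) y = (if i = j then (1:ℝ) else 0) * phiY Y y := by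
    intro i j y
    have hq := qf_ne y
    have hphi : phiY Y y = 4 * ((∑ k, y k * X k y) - ∑ k, y k * Pc b fm k y) / qf y := by
      unfold phiY uY
      congr 2
      rw [← Finset.sum_sub_distrib]
      exact Finset.sum_congr rfl fun k _ => by rw [hY]; ring
    have hphi2 : phiY Y y = (4 * ∑ k, y k * X k y) / qf y - 2 * ∑ k, b k * y k := by
      rw [hphi, xPc b fm hskew y]
      field_simp
      ring
    rw [hpdY i j y, hpdY j i y, hphi2]
    have hk := hks i j y
    have hfm2 : fm j i + fm i j = 0 := by
      have h5 := hskew i j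
      linarith [h5]
    by_cases hij : i = j
    · subst hij
      simp only [eq_self_iff_true, if_true] at hk ⊢
      linear_combination hk - hfm2
    · simp only [if_neg hij, if_neg (Ne.symm hij)] at hk ⊢
      linear_combination hk - hfm2
  have hz := Y_zero hYs hKY hn hY0 hYd0 i x
  have : X i x - Pc b fm i x = 0 := hz
  linarith

end S4

/-- any Killing vector field `X` of the sphere metric `Ψ·Σ(dxᵏ)²`,
`Ψ = 4/(1+|x|²)²`, has components
`Xⁱ = xⁱ(Σ bₖxᵏ) − (1/2)bᵢ|x|² + Σ fᵢₖxᵏ + (1/2)bᵢ` with `f` skew-symmetric. -/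
theorem stmt4 {n : ℕ} (hn : 2 ≤ n) (X : Fin n → (Fin n → ℝ) → ℝ)
    (hsmooth : ∀ i, ContDiff ℝ (⊤ : ℕ∞) (X i))
    (hKilling : ∀ (i j : Fin n) (x : Fin n → ℝ),
      covA psiS (fun k y => psiS y * X k y) i j x
        + covA psiS (fun k y => psiS y * X k y) j i x = 0) :
    ∃ (b : Fin n → ℝ) (f : Fin n → Fin n → ℝ),
      (∀ i k, f k i = - f i k) ∧
      ∀ i x, X i x =
        x i * (∑ k, b k * x k) - (1/2) * b i * (∑ k, (x k)^2)
        + (∑ k, f i k * x k) + (1/2) * b i := by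
  have hskew : ∀ i k : Fin n, pd i (X k) 0 = - pd k (X i) 0 := by
    intro i k
    have h := S4.killing_simp hsmooth hKilling k i 0
    have hz : (∑ j, (0 : Fin n → ℝ) j * X j 0) = 0 := by simp
    rw [hz] at h
    simp only [mul_zero, zero_div, mul_zero] at h
    linarith
  refine ⟨fun k => 2 * X k 0, fun i k => pd k (X i) 0, fun i k => hskew i k, ?_⟩
  intro i x
  have h := S4.X_eq_Pc hn hsmooth hKilling (fun i k => hskew i k) i x
  simpa [S4.Pc] using h
end
end
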